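/- Let G = ([n], E) be a graph and e = {1,2} ∈ E. Consider the standard quadratic program min{x^T(I + A_G + A_{G\e})x : x ∈ Δ_n}. Then this program has infinitely many global minimizers if and only if e is a critical edge of G. -/

import Mathlib

open Matrix Finset
open scoped Classical

def IsStable {n : ℕ} (G : SimpleGraph (Fin n)) (S : Finset (Fin n)) : Prop :=
  ∀ i ∈ S, ∀ j ∈ S, ¬ G.Adj i j

noncomputable def alpha {n : ℕ} (G : SimpleGraph (Fin n)) : ℕ :=
  sSup {k | ∃ S : Finset (Fin n), IsStable G S ∧ S.card = k}

noncomputable def indic {n : ℕ} (S : Finset (Fin n)) : Fin n → ℝ :=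
  fun i => if i ∈ S then 1 else 0

noncomputable def qform {n : ℕ} (M : Matrix (Fin n) (Fin n) ℝ) (x : Fin n → ℝ) : ℝ :=
  x ⬝ᵥ M.mulVec x

noncomputable def fG {n : ℕ} (G : SimpleGraph (Fin n)) (x : Fin n → ℝ) : ℝ :=
  qform (1 + G.adjMatrix ℝ) x

noncomputable def globMin {n : ℕ} (f : (Fin n → ℝ) → ℝ) : Set (Fin n → ℝ) :=
  {x | x ∈ stdSimplex ℝ (Fin n) ∧ ∀ y ∈ stdSimplex ℝ (Fin n), f x ≤ f y}

/-!
Split the objective as `x ⬝ (I + A_G) x + x ⬝ A_{G∖e} x`. On the simplex the first term is at least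
`1 / α(G)` (Motzkin–Straus): moving mass between the two ends of an edge inside the support changes
it affinely, so this can be done without increasing it until the support is stable, and then
Cauchy–Schwarz applies. The uniform vector on a maximum stable set of `G` attains `1 / α(G)`, so a
minimizer has support stable in `G ∖ e` and is, by the equality case of Cauchy–Schwarz, uniform on
its support as soon as that support has at most `α(G)` elements: if `α(G ∖ e) = α(G)` there are only
finitely many minimizers. If `e = uv` is critical, a maximum stable set `S` of `G ∖ e` contains `u`
and `v`; the uniform vectors on `S - u` and `S - v` are both minimizers, and their difference is
isotropic for the objective, so the objective is constant on the segment between them.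
-/

section QuadraticForm

variable {m : ℕ}

lemma qform_add (A B : Matrix (Fin m) (Fin m) ℝ) (x : Fin m → ℝ) :
    qform (A + B) x = qform A x + qform B x := by
  simp only [qform, add_mulVec, dotProduct_add]

lemma qform_one (x : Fin m → ℝ) : qform 1 x = ∑ i, x i ^ 2 := by
  simp [qform, dotProduct, sq]

lemma qform_smul (M : Matrix (Fin m) (Fin m) ℝ) (c : ℝ) (x : Fin m → ℝ) :
    qform M (c • x) = c ^ 2 * qform M x := by
  simp only [qform, mulVec_smul, dotProduct_smul, smul_dotProduct, smul_eq_mul]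
  ring

lemma qform_add_smul {M : Matrix (Fin m) (Fin m) ℝ} (hM : M.IsSymm) (x d : Fin m → ℝ) (t : ℝ) :
    qform M (x + t • d) = qform M x + 2 * t * (d ⬝ᵥ M *ᵥ x) + t ^ 2 * qform M d := by
  have hsymm : x ⬝ᵥ M *ᵥ d = d ⬝ᵥ M *ᵥ x := by
    rw [dotProduct_mulVec, dotProduct_comm, ← vecMul_transpose, hM.eq]
  simp only [qform, mulVec_add, mulVec_smul, dotProduct_add, add_dotProduct, dotProduct_smul,
    smul_dotProduct, hsymm, smul_eq_mul]
  ring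

lemma qform_single_sub_single (M : Matrix (Fin m) (Fin m) ℝ) (i j : Fin m) :
    qform M (Pi.single i 1 - Pi.single j 1) = M i i - M i j - M j i + M j j := by
  simp only [qform, mulVec_sub, mulVec_single_one, sub_dotProduct, dotProduct_sub,
    single_one_dotProduct, col_apply]
  ring

lemma qform_eq_of_qform_sub_eq_zero {M : Matrix (Fin m) (Fin m) ℝ} (hM : M.IsSymm)
    {x y : Fin m → ℝ} (hxy : qform M x = qform M y) (hd : qform M (y - x) = 0) (t : ℝ) :
    qform M (AffineMap.lineMap x y t) = qform M x := by
  have hy := qform_add_smul hM x (y - x) 1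
  simp only [one_smul, add_sub_cancel, hd, ← hxy] at hy
  have hslope : (y - x) ⬝ᵥ M *ᵥ x = 0 := by linarith
  rw [AffineMap.lineMap_apply_module', add_comm, qform_add_smul hM, hd, hslope]
  ring

lemma qform_adjMatrix (G : SimpleGraph (Fin m)) [DecidableRel G.Adj] (x : Fin m → ℝ) :
    qform (G.adjMatrix ℝ) x = ∑ i, ∑ j, if G.Adj i j then x i * x j else 0 := by
  simp [qform, dotProduct, mulVec, SimpleGraph.adjMatrix_apply, Finset.mul_sum]

end QuadraticForm

section StableSets

variable {m : ℕ} {G H : SimpleGraph (Fin m)} {S : Finset (Fin m)} {x : Fin m → ℝ}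

lemma qform_adjMatrix_nonneg (G : SimpleGraph (Fin m)) [DecidableRel G.Adj]
    (hx : ∀ i, 0 ≤ x i) : 0 ≤ qform (G.adjMatrix ℝ) x := by
  rw [qform_adjMatrix]
  refine Finset.sum_nonneg fun i _ => Finset.sum_nonneg fun j _ => ?_
  split_ifs
  exacts [mul_nonneg (hx i) (hx j), le_rfl]

lemma qform_adjMatrix_eq_zero [DecidableRel G.Adj] (hS : IsStable G S) (hx : ∀ i ∉ S, x i = 0) :
    qform (G.adjMatrix ℝ) x = 0 := by
  rw [qform_adjMatrix]
  refine Finset.sum_eq_zero fun i _ => Finset.sum_eq_zero fun j _ => ?_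
  by_cases hi : i ∈ S
  · by_cases hj : j ∈ S
    · simp [hS i hi j hj]
    · simp [hx j hj]
  · simp [hx i hi]

noncomputable def supportFinset (x : Fin m → ℝ) : Finset (Fin m) := {i | x i ≠ 0}

@[simp]
lemma mem_supportFinset {i : Fin m} : i ∈ supportFinset x ↔ x i ≠ 0 := by
  simp [supportFinset]

lemma supportFinset_nonempty (hx : ∑ i, x i = 1) : (supportFinset x).Nonempty := by
  by_contra h
  simp_all [Finset.not_nonempty_iff_eq_empty, Finset.eq_empty_iff_forall_notMem]

lemma isStable_supportFinset [DecidableRel G.Adj] (hx : ∀ i, 0 ≤ x i)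
    (h : qform (G.adjMatrix ℝ) x = 0) : IsStable G (supportFinset x) := by
  intro i hi j hj hij
  have hterm : ∀ k l, 0 ≤ if G.Adj k l then x k * x l else 0 := fun k l => by
    split_ifs
    exacts [mul_nonneg (hx k) (hx l), le_rfl]
  rw [qform_adjMatrix] at h
  have hrow := (Finset.sum_eq_zero_iff_of_nonneg fun k _ =>
    Finset.sum_nonneg fun l _ => hterm k l).1 h i (mem_univ i)
  have hij0 := (Finset.sum_eq_zero_iff_of_nonneg fun l _ => hterm i l).1 hrow j (mem_univ j)
  rw [if_pos hij] at hij0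
  exact mul_ne_zero (mem_supportFinset.1 hi) (mem_supportFinset.1 hj) hij0

lemma IsStable.anti (hHG : H ≤ G) (hS : IsStable G S) : IsStable H S :=
  fun i hi j hj hij => hS i hi j hj (hHG hij)

lemma isStable_iff_isIndepSet : IsStable G S ↔ G.IsIndepSet (S : Set (Fin m)) := by
  refine ⟨fun hS i hi j hj _ => hS i hi j hj, fun hS i hi j hj hij => ?_⟩
  exact hS hi hj hij.ne hij

lemma alpha_eq_indepNum (G : SimpleGraph (Fin m)) : alpha G = G.indepNum := by
  rw [alpha, SimpleGraph.indepNum]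
  congr 1
  ext k
  simp only [Set.mem_ofPred_eq, SimpleGraph.isNIndepSet_iff, isStable_iff_isIndepSet]

lemma IsStable.card_le_alpha (hS : IsStable G S) : #S ≤ alpha G :=
  alpha_eq_indepNum G ▸ (isStable_iff_isIndepSet.1 hS).card_le_indepNum

lemma exists_isStable_card_eq_alpha (G : SimpleGraph (Fin m)) :
    ∃ S, IsStable G S ∧ #S = alpha G := by
  obtain ⟨S, hS⟩ := G.exists_isNIndepSet_indepNum
  exact ⟨S, isStable_iff_isIndepSet.2 hS.isIndepSet, hS.card_eq.trans (alpha_eq_indepNum G).symm⟩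

lemma one_le_alpha (G : SimpleGraph (Fin m)) (u : Fin m) : 1 ≤ alpha G := by
  have hu : IsStable G {u} := by
    simp [IsStable]
  simpa using hu.card_le_alpha

lemma IsStable.erase_of_deleteEdges {u v : Fin m} (hS : IsStable (G.deleteEdges {s(u, v)}) S) :
    IsStable G (S.erase u) := by
  intro i hi j hj hij
  refine hS i (mem_of_mem_erase hi) j (mem_of_mem_erase hj) ?_
  simp only [SimpleGraph.deleteEdges_adj, Set.mem_singleton_iff, Sym2.eq_iff]
  exact ⟨hij, by rintro (⟨rfl, -⟩ | ⟨-, rfl⟩) <;> simp_all⟩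

lemma IsStable.mem_of_alpha_lt_card {u v : Fin m} (hS : IsStable (G.deleteEdges {s(u, v)}) S)
    (hcard : alpha G < #S) : u ∈ S := by
  by_contra hu
  have := hS.erase_of_deleteEdges.card_le_alpha
  rw [erase_eq_of_notMem hu] at this
  omega

lemma alpha_deleteEdges_le (u v : Fin m) : alpha (G.deleteEdges {s(u, v)}) ≤ alpha G + 1 := by
  obtain ⟨S, hS, hcard⟩ := exists_isStable_card_eq_alpha (G.deleteEdges {s(u, v)})
  have := hS.erase_of_deleteEdges.card_le_alpha
  have := pred_card_le_card_erase (s := S) (a := u)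
  omega

end StableSets

section Uniform

variable {m : ℕ} {S : Finset (Fin m)} {x : Fin m → ℝ}

noncomputable def uniformOn (S : Finset (Fin m)) : Fin m → ℝ := (#S : ℝ)⁻¹ • indic S

lemma uniformOn_apply (i : Fin m) : uniformOn S i = if i ∈ S then (#S : ℝ)⁻¹ else 0 := by
  simp [uniformOn, indic]

lemma uniformOn_mem_stdSimplex (hS : S.Nonempty) : uniformOn S ∈ stdSimplex ℝ (Fin m) := by
  refine ⟨fun i => ?_, ?_⟩
  · rw [uniformOn_apply]
    split_ifs <;> positivity
  · simp [uniformOn_apply, Finset.sum_ite_mem, hS.card_ne_zero]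

lemma sum_sq_uniformOn : ∑ i, uniformOn S i ^ 2 = (#S : ℝ)⁻¹ := by
  have hsq : ∀ i, uniformOn S i ^ 2 = if i ∈ S then ((#S : ℝ)⁻¹) ^ 2 else 0 := fun i => by
    rw [uniformOn_apply]
    split_ifs <;> simp
  rw [sum_congr rfl fun i _ => hsq i, sum_ite_mem, univ_inter, sum_const, nsmul_eq_mul]
  rcases S.eq_empty_or_nonempty with rfl | hS
  · simp
  · field_simp

lemma sum_sq_sub_uniformOn (hx : ∑ i, x i = 1) (hxS : ∀ i ∉ S, x i = 0) :
    ∑ i, (x i - uniformOn S i) ^ 2 = ∑ i, x i ^ 2 - (#S : ℝ)⁻¹ := by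
  have hcross : ∀ i, x i * uniformOn S i = (#S : ℝ)⁻¹ * x i := fun i => by
    rw [uniformOn_apply]
    split_ifs with hi
    · ring
    · simp [hxS i hi]
  have hexpand : ∀ i, (x i - uniformOn S i) ^ 2
      = x i ^ 2 - 2 * (x i * uniformOn S i) + uniformOn S i ^ 2 := fun i => by ring
  simp only [hexpand, hcross, sum_add_distrib, sum_sub_distrib, ← mul_sum, hx,
    sum_sq_uniformOn]
  ring

lemma inv_card_le_sum_sq (hx : ∑ i, x i = 1) (hxS : ∀ i ∉ S, x i = 0) :
    (#S : ℝ)⁻¹ ≤ ∑ i, x i ^ 2 := by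
  have := sum_sq_sub_uniformOn hx hxS
  have : 0 ≤ ∑ i, (x i - uniformOn S i) ^ 2 := sum_nonneg fun i _ => sq_nonneg _
  linarith

lemma eq_uniformOn_of_sum_sq_le (hx : ∑ i, x i = 1) (hxS : ∀ i ∉ S, x i = 0)
    (h : ∑ i, x i ^ 2 ≤ (#S : ℝ)⁻¹) : x = uniformOn S := by
  have hzero : ∑ i, (x i - uniformOn S i) ^ 2 = 0 :=
    le_antisymm (by linarith [sum_sq_sub_uniformOn hx hxS]) (sum_nonneg fun i _ => sq_nonneg _)
  funext i
  have := (sum_eq_zero_iff_of_nonneg fun i _ => sq_nonneg _).1 hzero i (mem_univ i)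
  exact sub_eq_zero.1 (pow_eq_zero_iff two_ne_zero |>.1 this)

lemma uniformOn_erase_sub_uniformOn_erase {u v : Fin m} (hu : u ∈ S) (hv : v ∈ S) (huv : u ≠ v) :
    uniformOn (S.erase u) - uniformOn (S.erase v)
      = (#(S.erase u) : ℝ)⁻¹ • (Pi.single v 1 - Pi.single u 1) := by
  have hcard : #(S.erase v) = #(S.erase u) := by rw [card_erase_of_mem hu, card_erase_of_mem hv]
  funext k
  simp only [Pi.sub_apply, Pi.smul_apply, uniformOn_apply, hcard, mem_erase, Pi.single_apply,
    smul_eq_mul]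
  by_cases hku : k = u
  · subst hku; simp [hu, huv]
  · by_cases hkv : k = v
    · subst hkv; simp [hv, Ne.symm huv]
    · simp [hku, hkv]

end Uniform

section MotzkinStraus

variable {m : ℕ} {G : SimpleGraph (Fin m)} {x : Fin m → ℝ}

lemma fG_add_smul_single_sub_single {i j : Fin m} (hij : G.Adj i j) (t : ℝ) :
    fG G (x + t • (Pi.single i 1 - Pi.single j 1))
      = fG G x + 2 * t * ((Pi.single i 1 - Pi.single j 1) ⬝ᵥ (1 + G.adjMatrix ℝ) *ᵥ x) := by
  rw [fG, fG, qform_add_smul (isSymm_one.add G.isSymm_adjMatrix), qform_single_sub_single]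
  simp [one_apply, hij, hij.symm, hij.ne, hij.ne']

lemma card_supportFinset_lt {y : Fin m → ℝ} (hyx : ∀ k, y k ≠ 0 → x k ≠ 0) {k : Fin m}
    (hxk : x k ≠ 0) (hyk : y k = 0) : #(supportFinset y) < #(supportFinset x) := by
  refine card_lt_card ⟨fun l hl => ?_, fun hsub => ?_⟩
  · exact mem_supportFinset.2 (hyx l (mem_supportFinset.1 hl))
  · exact mem_supportFinset.1 (hsub (mem_supportFinset.2 hxk)) hyk

lemma exists_fG_le_of_adj (hx : x ∈ stdSimplex ℝ (Fin m)) {i j : Fin m} (hij : G.Adj i j)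
    (hi : x i ≠ 0) (hj : x j ≠ 0) :
    ∃ y ∈ stdSimplex ℝ (Fin m), fG G y ≤ fG G x ∧ #(supportFinset y) < #(supportFinset x) := by
  set d : Fin m → ℝ := Pi.single i 1 - Pi.single j 1 with hd
  have hcoord : ∀ (t : ℝ) k,
      (x + t • d) k = if k = i then x i + t else if k = j then x j - t else x k := fun t k => by
      by_cases hki : k = i
      · subst hki; simp [hd, hij.ne]
      · by_cases hkj : k = j
        · subst hkj; simp [hd, hij.ne', sub_eq_add_neg]
        · simp [hd, hki, hkj]
  have hmem : ∀ t, -x i ≤ t → t ≤ x j → x + t • d ∈ stdSimplex ℝ (Fin m) := by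
    intro t hti htj
    refine ⟨fun k => ?_, ?_⟩
    · rw [hcoord]
      split_ifs
      exacts [by linarith, by linarith, hx.1 k]
    · simp [hd, sum_add_distrib, sum_sub_distrib, ← mul_sum, hx.2]
  have hsupp : ∀ (t : ℝ) k, (x + t • d) k ≠ 0 → x k ≠ 0 := by
    intro t k hk
    rw [hcoord] at hk
    split_ifs at hk with hki hkj
    exacts [hki ▸ hi, hkj ▸ hj, hk]
  -- `fG` is affine along `d`, so one end of the admissible interval does not increase it
  rcases le_or_gt 0 (d ⬝ᵥ (1 + G.adjMatrix ℝ) *ᵥ x) with hslope | hslope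
  · refine ⟨x + (-x i) • d, hmem _ le_rfl (by linarith [hx.1 i, hx.1 j]), ?_,
      card_supportFinset_lt (hsupp _) hi (by rw [hcoord, if_pos rfl]; ring)⟩
    rw [fG_add_smul_single_sub_single hij]
    nlinarith [hx.1 i]
  · refine ⟨x + x j • d, hmem _ (by linarith [hx.1 i, hx.1 j]) le_rfl, ?_,
      card_supportFinset_lt (hsupp _) hj (by rw [hcoord, if_neg hij.ne', if_pos rfl]; ring)⟩
    rw [fG_add_smul_single_sub_single hij]
    nlinarith [hx.1 j]

lemma exists_isStable_supportFinset_fG_le (hx : x ∈ stdSimplex ℝ (Fin m)) :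
    ∃ y ∈ stdSimplex ℝ (Fin m), IsStable G (supportFinset y) ∧ fG G y ≤ fG G x := by
  induction hk : #(supportFinset x) using Nat.strong_induction_on generalizing x with
  | _ k ih =>
    by_cases hst : IsStable G (supportFinset x)
    · exact ⟨x, hx, hst, le_rfl⟩
    obtain ⟨i, hi, j, hj, hij⟩ : ∃ i ∈ supportFinset x, ∃ j ∈ supportFinset x, G.Adj i j := by
      simpa [IsStable] using hst
    obtain ⟨y, hy, hyx, hcard⟩ :=
      exists_fG_le_of_adj hx hij (mem_supportFinset.1 hi) (mem_supportFinset.1 hj)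
    obtain ⟨z, hz, hzst, hzy⟩ := ih _ (hk ▸ hcard) hy rfl
    exact ⟨z, hz, hzst, hzy.trans hyx⟩

theorem inv_alpha_le_fG (hx : x ∈ stdSimplex ℝ (Fin m)) : (alpha G : ℝ)⁻¹ ≤ fG G x := by
  obtain ⟨y, hy, hst, hyx⟩ := exists_isStable_supportFinset_fG_le (G := G) hx
  have hy0 : ∀ i ∉ supportFinset y, y i = 0 := by simp
  have hcard : (0 : ℝ) < #(supportFinset y) := by
    exact_mod_cast (supportFinset_nonempty hy.2).card_pos
  calc (alpha G : ℝ)⁻¹ ≤ (#(supportFinset y) : ℝ)⁻¹ :=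
        inv_anti₀ hcard (by exact_mod_cast hst.card_le_alpha)
    _ ≤ ∑ i, y i ^ 2 := inv_card_le_sum_sq hy.2 hy0
    _ = fG G y := by rw [fG, qform_add, qform_one, qform_adjMatrix_eq_zero hst hy0, add_zero]
    _ ≤ fG G x := hyx

end MotzkinStraus

section Minimizers

variable {m : ℕ} {G H : SimpleGraph (Fin m)} {S : Finset (Fin m)} {x : Fin m → ℝ}

lemma inv_alpha_le_qform (H : SimpleGraph (Fin m)) [DecidableRel H.Adj]
    (hx : x ∈ stdSimplex ℝ (Fin m)) :
    (alpha G : ℝ)⁻¹ ≤ qform (1 + G.adjMatrix ℝ + H.adjMatrix ℝ) x := by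
  have : (alpha G : ℝ)⁻¹ ≤ qform (1 + G.adjMatrix ℝ) x := inv_alpha_le_fG hx
  rw [qform_add]
  linarith [qform_adjMatrix_nonneg H hx.1]

lemma qform_uniformOn [DecidableRel H.Adj] (hHG : H ≤ G) (hS : IsStable G S) :
    qform (1 + G.adjMatrix ℝ + H.adjMatrix ℝ) (uniformOn S) = (#S : ℝ)⁻¹ := by
  have hS0 : ∀ i ∉ S, uniformOn S i = 0 := fun i hi => by simp [uniformOn_apply, hi]
  rw [qform_add, qform_add, qform_one, sum_sq_uniformOn, qform_adjMatrix_eq_zero hS hS0,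
    qform_adjMatrix_eq_zero (hS.anti hHG) hS0, add_zero, add_zero]

lemma uniformOn_mem_globMin [DecidableRel H.Adj] (hHG : H ≤ G) (hS : IsStable G S)
    (hcard : #S = alpha G) (hne : S.Nonempty) :
    uniformOn S ∈ globMin (qform (1 + G.adjMatrix ℝ + H.adjMatrix ℝ)) := by
  refine ⟨uniformOn_mem_stdSimplex hne, fun y hy => ?_⟩
  rw [qform_uniformOn hHG hS, hcard]
  exact inv_alpha_le_qform H hy

lemma qform_eq_inv_alpha_of_mem_globMin [DecidableRel H.Adj] (hHG : H ≤ G)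
    (hx : x ∈ globMin (qform (1 + G.adjMatrix ℝ + H.adjMatrix ℝ))) :
    qform (1 + G.adjMatrix ℝ + H.adjMatrix ℝ) x = (alpha G : ℝ)⁻¹ := by
  obtain ⟨i, -⟩ := supportFinset_nonempty hx.1.2
  obtain ⟨S, hS, hcard⟩ := exists_isStable_card_eq_alpha G
  have hne : S.Nonempty := card_pos.1 (hcard ▸ one_le_alpha G i)
  refine le_antisymm ?_ (inv_alpha_le_qform H hx.1)
  simpa [qform_uniformOn hHG hS, hcard] using hx.2 _ (uniformOn_mem_stdSimplex hne)

theorem globMin_finite [DecidableRel H.Adj] (hHG : H ≤ G) (hα : alpha H ≤ alpha G) :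
    (globMin (qform (1 + G.adjMatrix ℝ + H.adjMatrix ℝ))).Finite := by
  refine (Set.finite_range uniformOn).subset fun x hx => ⟨supportFinset x, ?_⟩
  have hval := qform_eq_inv_alpha_of_mem_globMin hHG hx
  have hfG : (alpha G : ℝ)⁻¹ ≤ qform (1 + G.adjMatrix ℝ) x := inv_alpha_le_fG hx.1
  have hx0 : ∀ i ∉ supportFinset x, x i = 0 := by simp
  rw [qform_add] at hval
  have hH : qform (H.adjMatrix ℝ) x = 0 :=
    le_antisymm (by linarith) (qform_adjMatrix_nonneg H hx.1.1)
  have hcard : (0 : ℝ) < #(supportFinset x) := by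
    exact_mod_cast (supportFinset_nonempty hx.1.2).card_pos
  refine (eq_uniformOn_of_sum_sq_le hx.1.2 hx0 ?_).symm
  calc ∑ i, x i ^ 2 ≤ qform (1 + G.adjMatrix ℝ) x := by
        rw [qform_add, qform_one]
        linarith [qform_adjMatrix_nonneg G hx.1.1]
    _ = (alpha G : ℝ)⁻¹ := by linarith
    _ ≤ (#(supportFinset x) : ℝ)⁻¹ := inv_anti₀ hcard <| by
        exact_mod_cast (isStable_supportFinset hx.1.1 hH).card_le_alpha.trans hα

lemma segment_infinite {E : Type*} [AddCommGroup E] [Module ℝ E] {x y : E} (hxy : x ≠ y) :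
    (segment ℝ x y).Infinite := by
  rw [segment_eq_image_lineMap]
  exact (Set.Icc_infinite zero_lt_one).image (AffineMap.lineMap_injective ℝ hxy).injOn

lemma qform_deleteEdges_single_sub_single {u v : Fin m} (huv : G.Adj u v) :
    qform (1 + G.adjMatrix ℝ + (G.deleteEdges {s(u, v)}).adjMatrix ℝ)
      (Pi.single v 1 - Pi.single u 1) = 0 := by
  rw [qform_single_sub_single]
  simp [one_apply, huv, huv.symm, huv.ne, huv.ne']

theorem globMin_infinite_of_critical {u v : Fin m} (huv : G.Adj u v)
    (hα : alpha (G.deleteEdges {s(u, v)}) = alpha G + 1) :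
    (globMin (qform (1 + G.adjMatrix ℝ + (G.deleteEdges {s(u, v)}).adjMatrix ℝ))).Infinite := by
  have hHG : G.deleteEdges {s(u, v)} ≤ G := G.deleteEdges_le _
  have hM : (1 + G.adjMatrix ℝ + (G.deleteEdges {s(u, v)}).adjMatrix ℝ).IsSymm :=
    (isSymm_one.add G.isSymm_adjMatrix).add (G.deleteEdges _).isSymm_adjMatrix
  obtain ⟨S, hS, hcard⟩ := exists_isStable_card_eq_alpha (G.deleteEdges {s(u, v)})
  have hS' : IsStable (G.deleteEdges {s(v, u)}) S := by rwa [Sym2.eq_swap]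
  have hu : u ∈ S := hS.mem_of_alpha_lt_card (by omega)
  have hv : v ∈ S := hS'.mem_of_alpha_lt_card (by omega)
  have hcu : #(S.erase u) = alpha G := by rw [card_erase_of_mem hu]; omega
  have hcv : #(S.erase v) = alpha G := by rw [card_erase_of_mem hv]; omega
  set x := uniformOn (S.erase v)
  set y := uniformOn (S.erase u)
  have hx := uniformOn_mem_globMin hHG hS'.erase_of_deleteEdges hcv ⟨u, by simp [hu, huv.ne]⟩
  have hy := uniformOn_mem_globMin hHG hS.erase_of_deleteEdges hcu ⟨v, by simp [hv, huv.ne']⟩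
  have hxy : x ≠ y := fun h => by
    have hxu := congrFun h u
    simp only [x, y] at hxu
    rw [uniformOn_apply, uniformOn_apply, if_pos (mem_erase.2 ⟨huv.ne, hu⟩),
      if_neg (notMem_erase u S), inv_eq_zero, Nat.cast_eq_zero] at hxu
    exact (card_pos.2 ⟨u, mem_erase.2 ⟨huv.ne, hu⟩⟩).ne' hxu
  have hval : qform (1 + G.adjMatrix ℝ + (G.deleteEdges {s(u, v)}).adjMatrix ℝ) x
      = qform (1 + G.adjMatrix ℝ + (G.deleteEdges {s(u, v)}).adjMatrix ℝ) y := by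
    rw [qform_uniformOn hHG hS'.erase_of_deleteEdges, qform_uniformOn hHG hS.erase_of_deleteEdges,
      hcu, hcv]
  have hflat : qform (1 + G.adjMatrix ℝ + (G.deleteEdges {s(u, v)}).adjMatrix ℝ) (y - x) = 0 := by
    rw [uniformOn_erase_sub_uniformOn_erase hu hv huv.ne, qform_smul,
      qform_deleteEdges_single_sub_single huv, mul_zero]
  refine (segment_infinite hxy).mono fun p hp =>
    ⟨(convex_stdSimplex ℝ _).segment_subset hx.1 hy.1 hp, fun z hz => ?_⟩
  obtain ⟨t, -, rfl⟩ := segment_eq_image_lineMap ℝ x y ▸ hp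
  rw [qform_eq_of_qform_sub_eq_zero hM hval hflat]
  exact hx.2 z hz

end Minimizers

theorem stmt_19 (n : ℕ) (G : SimpleGraph (Fin (n+2))) (hadj : G.Adj 0 1) :
    (globMin (qform (1 + G.adjMatrix ℝ +
        (G.deleteEdges {s((0 : Fin (n+2)), 1)}).adjMatrix ℝ))).Infinite ↔
      alpha (G.deleteEdges {s((0 : Fin (n+2)), 1)}) = alpha G + 1 := by
  refine ⟨fun hinf => ?_, globMin_infinite_of_critical hadj⟩
  by_contra hα
  have hle := alpha_deleteEdges_le (G := G) 0 1
  exact hinf (globMin_finite (G.deleteEdges_le _) (by omega))
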